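/- arXiv:2012.06796 — 3 statements merged into one kernel-verified Lean document; each statement's English description precedes it below -/
import Mathlib

section
/- Let n ∈ ℕ, m > 0, s > n/2 + 1, and define G^n_{s,m}(r) := (2π)^{-n/2} Γ(s)^{-1} ∫₀^∞ e^{-r²/(2t)} e^{-m²t} t^{s-n/2-1} dt. Then lim_{r→0⁺} r^{-2}·(G^n_{s,m}(0) - G^n_{s,m}(r)) = Γ(s - n/2 - 1) / (2^{n/2+1} · m^{2s-n-2} · π^{n/2} · Γ(s)). -/
/-!
Put `α = s - n/2 - 1`. Up to the constant `(2π)^{-n/2} Γ(s)⁻¹`, `G(0) - G(r)` is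
`∫ (1 - e^{-r²/(2t)}) e^{-m²t} t^α dt`. Since `0 ≤ 1 - e^{-x} ≤ x`, the integrand divided by `r²` is
dominated by `t^{α-1} e^{-m²t} / 2`, which is integrable exactly because `α > 0`, and it converges
pointwise to that function. Dominated convergence and `∫₀^∞ t^{α-1} e^{-bt} dt = Γ(α) b^{-α}` give
the limit.
-/

open Real Filter

/-- The radial profile of the Green kernel of `(m² - Δ/2)^s` on `ℝⁿ`. -/
noncomputable def euclideanGreenKernel (n : ℕ) (s m r : ℝ) : ℝ :=
  (2 * Real.pi) ^ (-(n : ℝ) / 2) * (Real.Gamma s)⁻¹ *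
    ∫ t in Set.Ioi (0 : ℝ),
      Real.exp (-r ^ 2 / (2 * t)) * Real.exp (-m ^ 2 * t) * t ^ (s - (n : ℝ) / 2 - 1)

open MeasureTheory Set Topology

lemma exp_neg_sq_div_le_one (r : ℝ) {t : ℝ} (ht : 0 ≤ t) : exp (-r ^ 2 / (2 * t)) ≤ 1 :=
  exp_le_one_iff.mpr (div_nonpos_of_nonpos_of_nonneg (neg_nonpos.mpr (sq_nonneg r)) (by positivity))

lemma tendsto_one_sub_exp_neg_sq_div_div_sq {c : ℝ} (hc : c ≠ 0) :
    Tendsto (fun r : ℝ => (1 - exp (-r ^ 2 / c)) / r ^ 2) (𝓝[≠] 0) (𝓝 c⁻¹) := by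
  have hslope : Tendsto (slope exp 0) (𝓝[≠] 0) (𝓝 1) := by
    simpa using hasDerivAt_iff_tendsto_slope.mp (hasDerivAt_exp 0)
  have hexponent : Tendsto (fun r : ℝ => -r ^ 2 / c) (𝓝[≠] 0) (𝓝[≠] 0) := by
    refine tendsto_nhdsWithin_iff.mpr ⟨?_, ?_⟩
    · simpa using (((continuous_pow 2).neg.div_const c).tendsto 0).mono_left nhdsWithin_le_nhds
    · filter_upwards [self_mem_nhdsWithin] with r hr
      simpa [hc] using hr
  refine (one_mul c⁻¹ ▸ (hslope.comp hexponent).mul_const c⁻¹).congr' ?_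
  filter_upwards [self_mem_nhdsWithin] with r (hr : r ≠ 0)
  simp only [Function.comp, slope_def_field, sub_zero, exp_zero]
  field_simp
  ring

theorem tendsto_integral_one_sub_exp_neg_sq_div_mul_div_sq {w : ℝ → ℝ}
    (hw : IntegrableOn (fun t => w t / t) (Ioi 0)) :
    Tendsto (fun r => ∫ t in Ioi 0, (1 - exp (-r ^ 2 / (2 * t))) * w t / r ^ 2) (𝓝[≠] 0)
      (𝓝 (∫ t in Ioi 0, w t / (2 * t))) := by
  have hw_meas : AEStronglyMeasurable w (volume.restrict (Ioi 0)) := by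
    refine (continuous_id.aestronglyMeasurable.mul hw.aestronglyMeasurable).congr ?_
    filter_upwards [self_mem_ae_restrict measurableSet_Ioi] with t (ht : 0 < t)
    simp [mul_div_cancel₀ _ ht.ne']
  refine tendsto_integral_filter_of_dominated_convergence (fun t => ‖w t / t‖ / 2) ?_ ?_
    (hw.norm.div_const 2) ?_
  · refine Eventually.of_forall fun r => ?_
    have hfactor : AEStronglyMeasurable (fun t : ℝ => 1 - exp (-r ^ 2 / (2 * t)))
        (volume.restrict (Ioi 0)) := (by fun_prop : Measurable _).aestronglyMeasurable
    fun_prop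
  · filter_upwards [self_mem_nhdsWithin] with r (hr : r ≠ 0)
    filter_upwards [self_mem_ae_restrict measurableSet_Ioi] with t (ht : 0 < t)
    have hlow : 0 ≤ 1 - exp (-r ^ 2 / (2 * t)) := sub_nonneg.mpr (exp_neg_sq_div_le_one r ht.le)
    have hup : 1 - exp (-r ^ 2 / (2 * t)) ≤ r ^ 2 / (2 * t) := by
      rw [neg_div]; linarith [one_sub_le_exp_neg (r ^ 2 / (2 * t))]
    calc ‖(1 - exp (-r ^ 2 / (2 * t))) * w t / r ^ 2‖
        = (1 - exp (-r ^ 2 / (2 * t))) * |w t| / r ^ 2 := by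
          simp only [norm_div, norm_mul, norm_pow, Real.norm_of_nonneg hlow, Real.norm_eq_abs,
            sq_abs]
      _ ≤ r ^ 2 / (2 * t) * |w t| / r ^ 2 := by gcongr
      _ = ‖w t / t‖ / 2 := by
          rw [Real.norm_eq_abs, abs_div, abs_of_pos ht]; field_simp
  · filter_upwards [self_mem_ae_restrict measurableSet_Ioi] with t (ht : 0 < t)
    have h := (tendsto_one_sub_exp_neg_sq_div_div_sq (c := 2 * t) (by positivity)).mul_const (w t)
    rw [inv_mul_eq_div] at h
    exact h.congr fun r => by ring

lemma integrableOn_rpow_mul_exp_neg_mul {b β : ℝ} (hb : 0 < b) (hβ : -1 < β) :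
    IntegrableOn (fun t : ℝ => t ^ β * exp (-b * t)) (Ioi 0) := by
  simpa using integrableOn_rpow_mul_exp_neg_mul_rpow hβ one_pos hb

noncomputable def greenIntegral (b α r : ℝ) : ℝ :=
  ∫ t in Ioi (0 : ℝ), exp (-r ^ 2 / (2 * t)) * exp (-b * t) * t ^ α

section greenIntegral

variable {b α : ℝ}

lemma integrableOn_greenIntegrand (hb : 0 < b) (hα : -1 < α) (r : ℝ) :
    IntegrableOn (fun t : ℝ => exp (-r ^ 2 / (2 * t)) * exp (-b * t) * t ^ α) (Ioi 0) := by
  refine (integrableOn_rpow_mul_exp_neg_mul hb hα).mono' (by fun_prop) ?_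
  filter_upwards [self_mem_ae_restrict measurableSet_Ioi] with t (ht : 0 < t)
  rw [Real.norm_of_nonneg (by positivity), mul_comm (t ^ α)]
  exact mul_le_of_le_one_left (by positivity) (exp_neg_sq_div_le_one r ht.le) |>.trans_eq' (by ring)

lemma greenIntegral_zero_sub (hb : 0 < b) (hα : -1 < α) (r : ℝ) :
    greenIntegral b α 0 - greenIntegral b α r =
      ∫ t in Ioi 0, (1 - exp (-r ^ 2 / (2 * t))) * (exp (-b * t) * t ^ α) := by
  rw [greenIntegral, greenIntegral, ← integral_sub (integrableOn_greenIntegrand hb hα 0)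
    (integrableOn_greenIntegrand hb hα r)]
  congr 1 with t
  rw [zero_pow two_ne_zero, neg_zero, zero_div, exp_zero]
  ring

theorem tendsto_greenIntegral_zero_sub_div_sq (hb : 0 < b) (hα : 0 < α) :
    Tendsto (fun r => (greenIntegral b α 0 - greenIntegral b α r) / r ^ 2) (𝓝[≠] 0)
      (𝓝 (Gamma α / (2 * b ^ α))) := by
  have hweight : EqOn (fun t : ℝ => exp (-b * t) * t ^ α / t)
      (fun t => t ^ (α - 1) * exp (-b * t)) (Ioi 0) := fun t (ht : 0 < t) => by
    dsimp only; rw [rpow_sub_one ht.ne']; ring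
  have hlim := tendsto_integral_one_sub_exp_neg_sq_div_mul_div_sq
    (w := fun t => exp (-b * t) * t ^ α)
    ((integrableOn_rpow_mul_exp_neg_mul hb (by linarith : -1 < α - 1)).congr_fun
      (fun t ht => (hweight ht).symm) measurableSet_Ioi)
  have hvalue : ∫ t in Ioi 0, exp (-b * t) * t ^ α / (2 * t) = Gamma α / (2 * b ^ α) := by
    simp_rw [mul_comm (2 : ℝ), ← div_div]
    rw [integral_div, setIntegral_congr_fun measurableSet_Ioi hweight]
    simp only [neg_mul]
    rw [integral_rpow_mul_exp_neg_mul_Ioi hα hb, one_div, inv_rpow hb.le]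
    ring
  rw [hvalue] at hlim
  exact hlim.congr fun r => by rw [greenIntegral_zero_sub hb (by linarith) r, ← integral_div]

end greenIntegral

/-- Small-`r` asymptotics of the Euclidean Green kernel in the regular case `s > n/2 + 1`:
`(G(0) - G(r))/r² → Γ(s - n/2 - 1)/(2^{n/2+1} m^{2s-n-2} π^{n/2} Γ(s))`. -/
theorem euclidean_green_kernel_asymptotics_smooth (n : ℕ) (s m : ℝ)
    (hm : 0 < m) (hs : (n : ℝ) / 2 + 1 < s) :
    Tendsto
      (fun r : ℝ =>
        (euclideanGreenKernel n s m 0 - euclideanGreenKernel n s m r) / r ^ 2)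
      (nhdsWithin 0 (Set.Ioi 0))
      (nhds (Real.Gamma (s - (n : ℝ) / 2 - 1) /
        (2 ^ ((n : ℝ) / 2 + 1) * m ^ (2 * s - (n : ℝ) - 2) * Real.pi ^ ((n : ℝ) / 2) *
          Real.Gamma s))) := by
  set α := s - (n : ℝ) / 2 - 1 with hα
  set C := (2 * π) ^ (-(n : ℝ) / 2) * (Gamma s)⁻¹ with hC
  have hkernel : ∀ r, euclideanGreenKernel n s m r = C * greenIntegral (m ^ 2) α r := fun _ => rfl
  have hlim := ((tendsto_greenIntegral_zero_sub_div_sq (pow_pos hm 2)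
    (by linarith : 0 < α)).const_mul C).mono_left (nhdsGT_le_nhdsNE 0)
  simp only [hkernel, ← mul_sub, mul_div_assoc]
  convert hlim using 2
  have hpow : (m ^ 2) ^ α = m ^ (2 * s - (n : ℝ) - 2) := by
    rw [← rpow_natCast, ← rpow_mul hm.le, hα]; push_cast; ring_nf
  rw [hpow, hC, neg_div, rpow_neg (by positivity), mul_rpow (by norm_num) pi_pos.le,
    rpow_add_one (by norm_num)]
  field_simp
end

section
/- Let n ∈ ℕ, m > 0, and n/2 < s < n/2 + 1. With G^n_{s,m} as the Euclidean Green kernel defined by the subordination integral, lim_{r→0⁺} r^{-(2s-n)}·(G^n_{s,m}(0) - G^n_{s,m}(r)) = -Γ(n/2 - s) / (2^s · π^{n/2} · Γ(s)). -/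
open Real Filter

open MeasureTheory Set Topology

/-
With `a = s - n/2 ∈ (0, 1)`, `G(0) - G(r)` is the subordination integral of
`(1 - e^{-r²/(2t)}) e^{-m²t} t^{a-1}`. The substitution `t = r²/(2v)` pulls out `(r²/2)^a` and
leaves `∫ (1 - e^{-v}) e^{-m²r²/(2v)} v^{-a-1} dv`, which tends by dominated convergence to
`∫ (1 - e^{-v}) v^{-a-1} dv`. Integrating by parts against `v^{-a}/(-a)` turns the latter into
Euler's integral for `Γ(1 - a) / a = -Γ(-a)`.
-/

lemma one_sub_exp_neg_le_self (x : ℝ) : 1 - exp (-x) ≤ x := by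
  linarith [add_one_le_exp (-x)]

lemma one_sub_exp_neg_nonneg {x : ℝ} (hx : 0 ≤ x) : 0 ≤ 1 - exp (-x) := by
  simpa using exp_le_one_iff.mpr (neg_nonpos.mpr hx)

lemma integrableOn_one_sub_exp_neg_mul_rpow {a : ℝ} (ha₀ : 0 < a) (ha₁ : a < 1) :
    IntegrableOn (fun v : ℝ => (1 - exp (-v)) * v ^ (-a - 1)) (Ioi 0) := by
  have hmeas : ∀ S ⊆ Ioi (0 : ℝ), MeasurableSet S →
      AEStronglyMeasurable (fun v : ℝ => (1 - exp (-v)) * v ^ (-a - 1)) (volume.restrict S) :=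
    fun S hS hSm => ContinuousOn.aestronglyMeasurable (hs := hSm) <|
      ((continuous_const.sub (continuous_exp.comp continuous_neg)).continuousOn.mul
        (continuousOn_id.rpow_const fun v hv => Or.inl (ne_of_gt (hS hv))))
  rw [← Ioc_union_Ioi_eq_Ioi zero_le_one, integrableOn_union]
  constructor
  · have hdom : IntegrableOn (fun v : ℝ => v ^ (-a)) (Ioc 0 1) := by
      rw [← intervalIntegrable_iff_integrableOn_Ioc_of_le zero_le_one]
      exact intervalIntegral.intervalIntegrable_rpow' (by linarith)
    refine hdom.mono' (hmeas _ Ioc_subset_Ioi_self measurableSet_Ioc) ?_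
    refine (ae_restrict_iff' measurableSet_Ioc).mpr (.of_forall fun v ⟨hv, _⟩ => ?_)
    have hpow : v ^ (-a) = v * v ^ (-a - 1) := by
      rw [mul_comm, ← rpow_add_one hv.ne']; ring_nf
    rw [norm_of_nonneg (by have := one_sub_exp_neg_nonneg hv.le; positivity), hpow]
    exact mul_le_mul_of_nonneg_right (one_sub_exp_neg_le_self v) (by positivity)
  · refine (integrableOn_Ioi_rpow_of_lt (a := -a - 1) (by linarith) one_pos).mono'
      (hmeas _ (Ioi_subset_Ioi zero_le_one) measurableSet_Ioi) ?_
    refine (ae_restrict_iff' measurableSet_Ioi).mpr (.of_forall fun v (hv : 1 < v) => ?_)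
    rw [norm_of_nonneg (by have := one_sub_exp_neg_nonneg (zero_le_one.trans hv.le); positivity)]
    exact mul_le_of_le_one_left (by positivity) (by linarith [exp_pos (-v)])

lemma integral_one_sub_exp_neg_mul_rpow {a : ℝ} (ha₀ : 0 < a) (ha₁ : a < 1) :
    ∫ v in Ioi 0, (1 - exp (-v)) * v ^ (-a - 1) = -Gamma (-a) := by
  have hGamma : IntegrableOn (fun v : ℝ => exp (-v) * (v ^ (-a) / -a)) (Ioi 0) := by
    refine IntegrableOn.congr_fun
      ((GammaIntegral_convergent (s := 1 - a) (by linarith)).div_const (-a))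
      (fun v _ => ?_) measurableSet_Ioi
    ring_nf
  have hzero : Tendsto (fun v : ℝ => (1 - exp (-v)) * v ^ (-a)) (𝓝[>] 0) (𝓝 0) := by
    have hlim : Tendsto (fun v : ℝ => v ^ (1 - a)) (𝓝[>] 0) (𝓝 0) := by
      simpa [zero_rpow (by linarith : 1 - a ≠ 0)] using
        ((continuousAt_rpow_const 0 (1 - a) (Or.inr (by linarith))).tendsto).mono_left
          nhdsWithin_le_nhds
    refine squeeze_zero' ?_ ?_ hlim <;> filter_upwards [self_mem_nhdsWithin] with v (hv : 0 < v)
    · have := one_sub_exp_neg_nonneg hv.le; positivity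
    · rw [sub_eq_add_neg 1 a, rpow_add hv, rpow_one]
      exact mul_le_mul_of_nonneg_right (one_sub_exp_neg_le_self v) (by positivity)
  have htop : Tendsto (fun v : ℝ => (1 - exp (-v)) * v ^ (-a)) atTop (𝓝 0) := by
    refine squeeze_zero' ?_ ?_ (tendsto_rpow_neg_atTop ha₀) <;>
      filter_upwards [eventually_gt_atTop 0] with v hv
    · have := one_sub_exp_neg_nonneg hv.le; positivity
    · exact mul_le_of_le_one_left (by positivity) (by linarith [exp_pos (-v)])
  have hparts := integral_Ioi_mul_deriv_eq_deriv_mul (a := 0) (a' := 0) (b' := 0)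
    (u := fun v => 1 - exp (-v)) (u' := fun v => exp (-v))
    (v := fun v => v ^ (-a) / -a) (v' := fun v => v ^ (-a - 1))
    (fun v _ => by simpa using ((hasDerivAt_neg v).exp).const_sub 1)
    (fun v hv => ((hasDerivAt_rpow_const (Or.inl (ne_of_gt hv))).div_const (-a)).congr_deriv
      (by field_simp))
    (integrableOn_one_sub_exp_neg_mul_rpow ha₀ ha₁) hGamma
    (by simpa [Pi.mul_def, mul_div_assoc] using hzero.div_const (-a))
    (by simpa [Pi.mul_def, mul_div_assoc] using htop.div_const (-a))
  have hΓ : Gamma (-a + 1) = ∫ v in Ioi 0, exp (-v) * v ^ (-a) := by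
    rw [Gamma_eq_integral (by linarith), add_sub_cancel_right]
  rw [hparts]
  simp_rw [← mul_div_assoc]
  rw [integral_div, ← hΓ, Gamma_add_one (neg_ne_zero.mpr ha₀.ne')]
  field_simp
  ring

lemma integral_Ioi_comp_div {E : Type*} [NormedAddCommGroup E] [NormedSpace ℝ E]
    (f : ℝ → E) {c : ℝ} (hc : 0 < c) :
    ∫ v in Ioi 0, (c / v ^ 2) • f (c / v) = ∫ t in Ioi 0, f t := by
  have hinv := integral_comp_rpow_Ioi (fun y => f (c * y)) (p := -1) (by norm_num)
  rw [integral_comp_mul_left_Ioi f 0 hc, mul_zero] at hinv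
  rw [← smul_inv_smul₀ hc.ne' (∫ t in Ioi 0, f t), ← hinv, ← integral_smul]
  refine setIntegral_congr_fun measurableSet_Ioi fun v (hv : 0 < v) => ?_
  rw [smul_smul, rpow_neg_one, show (-1 : ℝ) - 1 = -(2 : ℕ) by norm_num, rpow_neg hv.le,
    rpow_natCast]
  simp [div_eq_mul_inv]

lemma integral_one_sub_exp_neg_div_mul_exp_neg_mul_rpow (a b : ℝ) {c : ℝ} (hc : 0 < c) :
    ∫ t in Ioi 0, (1 - exp (-c / t)) * exp (-b * t) * t ^ (a - 1)
      = c ^ a * ∫ v in Ioi 0, (1 - exp (-v)) * exp (-(b * c) / v) * v ^ (-a - 1) := by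
  rw [← integral_Ioi_comp_div _ hc, ← integral_const_mul]
  refine setIntegral_congr_fun measurableSet_Ioi fun v (hv : 0 < v) => ?_
  have hpow : c ^ a = c * c ^ (a - 1) := by
    rw [mul_comm, ← rpow_add_one hc.ne']; ring_nf
  have hpow' : v ^ (-a - 1) = (v ^ (a - 1))⁻¹ / v ^ 2 := by
    rw [show -a - 1 = -(a - 1) - (2 : ℕ) by push_cast; ring, rpow_sub hv, rpow_neg hv.le,
      rpow_natCast]
  rw [smul_eq_mul, div_rpow hc.le hv.le, hpow, hpow', show -c / (c / v) = -v by field_simp]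
  field_simp

lemma tendsto_integral_one_sub_exp_neg_mul_exp_neg_div_mul_rpow {a : ℝ} (ha₀ : 0 < a)
    (ha₁ : a < 1) :
    Tendsto (fun ε : ℝ => ∫ v in Ioi 0, (1 - exp (-v)) * exp (-ε / v) * v ^ (-a - 1))
      (𝓝[≥] 0) (𝓝 (-Gamma (-a))) := by
  rw [← integral_one_sub_exp_neg_mul_rpow ha₀ ha₁]
  refine tendsto_integral_filter_of_dominated_convergence _ (.of_forall fun ε => ?_) ?_
    (integrableOn_one_sub_exp_neg_mul_rpow ha₀ ha₁) (.of_forall fun v => ?_)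
  · refine ContinuousOn.aestronglyMeasurable ?_ measurableSet_Ioi
    exact ((continuous_const.sub (continuous_exp.comp continuous_neg)).continuousOn.mul
      (continuous_exp.comp_continuousOn (continuousOn_const.div continuousOn_id
        fun v hv => ne_of_gt hv))).mul
      (continuousOn_id.rpow_const fun v hv => Or.inl (ne_of_gt hv))
  · filter_upwards [self_mem_nhdsWithin] with ε (hε : 0 ≤ ε)
    refine (ae_restrict_iff' measurableSet_Ioi).mpr (.of_forall fun v (hv : 0 < v) => ?_)
    have := one_sub_exp_neg_nonneg hv.le
    rw [norm_of_nonneg (by positivity)]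
    refine mul_le_mul_of_nonneg_right (mul_le_of_le_one_right this ?_) (by positivity)
    exact exp_le_one_iff.mpr (div_nonpos_of_nonpos_of_nonneg (neg_nonpos.mpr hε) hv.le)
  · have hcont : Continuous fun ε : ℝ => (1 - exp (-v)) * exp (-ε / v) * v ^ (-a - 1) := by
      fun_prop
    simpa using (hcont.tendsto 0).mono_left nhdsWithin_le_nhds

lemma integrableOn_exp_neg_mul_mul_rpow {a b : ℝ} (ha : 0 < a) (hb : 0 < b) :
    IntegrableOn (fun t : ℝ => exp (-b * t) * t ^ (a - 1)) (Ioi 0) :=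
  (integrableOn_rpow_mul_exp_neg_mul_rpow (s := a - 1) (p := 1) (by linarith) one_pos
    hb).congr_fun (fun t _ => by dsimp only; rw [rpow_one, mul_comm]) measurableSet_Ioi

lemma euclideanGreenKernel_zero_sub (n : ℕ) {s m : ℝ} (r : ℝ) (hm : m ≠ 0)
    (hs : (n : ℝ) / 2 < s) :
    euclideanGreenKernel n s m 0 - euclideanGreenKernel n s m r
      = (2 * π) ^ (-(n : ℝ) / 2) * (Gamma s)⁻¹ *
        ∫ t in Ioi 0, (1 - exp (-(r ^ 2 / 2) / t)) * exp (-m ^ 2 * t) * t ^ (s - n / 2 - 1) := by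
  have hf₀ := integrableOn_exp_neg_mul_mul_rpow (a := s - n / 2) (b := m ^ 2) (sub_pos.mpr hs)
    (pow_two_pos_of_ne_zero hm)
  have hf : IntegrableOn (fun t : ℝ =>
      exp (-r ^ 2 / (2 * t)) * exp (-m ^ 2 * t) * t ^ (s - n / 2 - 1)) (Ioi 0) := by
    refine hf₀.mono' ?_ ((ae_restrict_iff' measurableSet_Ioi).mpr
      (.of_forall fun t (ht : 0 < t) => ?_))
    · refine ContinuousOn.aestronglyMeasurable ?_ measurableSet_Ioi
      exact ((continuous_exp.comp_continuousOn (continuousOn_const.div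
        (continuousOn_const.mul continuousOn_id) fun t (ht : 0 < t) => by simp [ne_of_gt ht])).mul
          (by fun_prop)).mul (continuousOn_id.rpow_const fun t ht => Or.inl (ne_of_gt ht))
    · rw [norm_of_nonneg (by positivity), mul_assoc]
      refine mul_le_of_le_one_left (by positivity) (exp_le_one_iff.mpr ?_)
      exact div_nonpos_of_nonpos_of_nonneg (by nlinarith) (by positivity)
  unfold euclideanGreenKernel
  rw [← mul_sub, ← integral_sub (hf₀.congr_fun (fun t _ => by simp) measurableSet_Ioi) hf]
  congr 1
  refine setIntegral_congr_fun measurableSet_Ioi fun t _ => ?_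
  rw [show -(r ^ 2 / 2) / t = -r ^ 2 / (2 * t) by ring]
  simp only [zero_pow two_ne_zero, neg_zero, zero_div, exp_zero, one_mul]
  ring

lemma sq_div_two_rpow {r : ℝ} (hr : 0 ≤ r) (a : ℝ) :
    (r ^ 2 / 2) ^ a = 2 ^ (-a) * r ^ (2 * a) := by
  rw [div_rpow (by positivity) zero_le_two, rpow_neg zero_le_two, ← rpow_natCast,
    ← rpow_mul hr, Nat.cast_ofNat, div_eq_inv_mul]

lemma euclideanGreenKernel_asymptotic_constant (n : ℕ) (s : ℝ) :
    (2 * π) ^ (-(n : ℝ) / 2) * (Gamma s)⁻¹ * 2 ^ (-(s - n / 2)) * -Gamma (-(s - n / 2))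
      = -Gamma (n / 2 - s) / (2 ^ s * π ^ ((n : ℝ) / 2) * Gamma s) := by
  have h2 : (2 : ℝ) ^ (-((n : ℝ) / 2)) * 2 ^ ((n : ℝ) / 2 - s) = (2 ^ s)⁻¹ := by
    rw [← rpow_add zero_lt_two, ← rpow_neg zero_le_two]; congr 1; ring
  rw [mul_rpow zero_le_two pi_pos.le, neg_div, rpow_neg pi_pos.le]
  simp only [neg_sub]
  calc _ = (2 ^ (-((n : ℝ) / 2)) * 2 ^ ((n : ℝ) / 2 - s)) * (π ^ ((n : ℝ) / 2))⁻¹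
        * (Gamma s)⁻¹ * -Gamma (n / 2 - s) := by ring
    _ = _ := by rw [h2]; field_simp

/-- Small-`r` asymptotics of the Euclidean Green kernel in the fractional regime
`n/2 < s < n/2 + 1`: `(G(0) - G(r))/r^{2s-n} → -Γ(n/2 - s)/(2^s π^{n/2} Γ(s))`. -/
theorem euclidean_green_kernel_asymptotics_fractional (n : ℕ) (s m : ℝ)
    (hm : 0 < m) (hs₁ : (n : ℝ) / 2 < s) (hs₂ : s < (n : ℝ) / 2 + 1) :
    Tendsto
      (fun r : ℝ =>
        (euclideanGreenKernel n s m 0 - euclideanGreenKernel n s m r) / r ^ (2 * s - (n : ℝ)))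
      (nhdsWithin 0 (Set.Ioi 0))
      (nhds (-Real.Gamma ((n : ℝ) / 2 - s) /
        (2 ^ s * Real.pi ^ ((n : ℝ) / 2) * Real.Gamma s))) := by
  have hε : Tendsto (fun r : ℝ => m ^ 2 * (r ^ 2 / 2)) (𝓝[>] 0) (𝓝[≥] 0) := by
    refine tendsto_nhdsWithin_of_tendsto_nhds_of_eventually_within _ ?_
      (.of_forall fun r => mem_Ici.mpr (by positivity))
    simpa using ((by fun_prop : Continuous fun r : ℝ => m ^ 2 * (r ^ 2 / 2)).tendsto 0).mono_left
      nhdsWithin_le_nhds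
  have hlim := ((tendsto_integral_one_sub_exp_neg_mul_exp_neg_div_mul_rpow (a := s - n / 2)
    (by linarith) (by linarith)).comp hε).const_mul
    ((2 * π) ^ (-(n : ℝ) / 2) * (Gamma s)⁻¹ * 2 ^ (-(s - n / 2)))
  rw [euclideanGreenKernel_asymptotic_constant] at hlim
  refine hlim.congr' ?_
  filter_upwards [self_mem_nhdsWithin] with r (hr : 0 < r)
  rw [Function.comp_apply, euclideanGreenKernel_zero_sub n r hm.ne' hs₁,
    integral_one_sub_exp_neg_div_mul_exp_neg_mul_rpow _ _ (by positivity), sq_div_two_rpow hr.le,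
    show 2 * (s - n / 2) = 2 * s - n by ring]
  field_simp
end

section
/- Let v(r) = (π - r)²/(4π²) + 1/(8π²) - 1/12 and u(r) = (1/(2π²))·(-(1/2) + (π - r)·cot(r)) for r ∈ (0, π). Then v''(r) + 2·cot(r)·v'(r) = -2·u(r) and ∫₀^π v(r)·sin²(r) dr = 0. -/
/-!
The kernel is a quadratic `a (π - r)² + c` with `a = 1/(4π²)`, so its radial Laplacian is
`2a - 4a (π - r) cot r`, which is `-2u` on the nose. For the average, the reflection `r ↦ π - r`
turns `∫₀^π (π - r)² sin² r` into `∫₀^π r² sin² r = π³/6 - π/4`, and together with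
`∫₀^π sin² = π/2` the two contributions cancel.
-/

open Real intervalIntegral

theorem deriv_const_mul_sub_sq_add (a b c : ℝ) :
    deriv (fun r : ℝ => a * (b - r) ^ 2 + c) = fun r => -2 * a * (b - r) := by
  funext r
  have h := ((((hasDerivAt_id r).const_sub b).pow 2).const_mul a).add_const c
  simpa [mul_comm, mul_left_comm, mul_assoc] using h.deriv

theorem deriv_deriv_const_mul_sub_sq_add (a b c : ℝ) :
    deriv (deriv fun r : ℝ => a * (b - r) ^ 2 + c) = fun _ => 2 * a := by
  rw [deriv_const_mul_sub_sq_add]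
  funext r
  simp

theorem hasDerivAt_sq_mul_sin_sq_antideriv (x : ℝ) :
    HasDerivAt (fun x => x ^ 3 / 6 - x ^ 2 * sin (2 * x) / 4 - x * cos (2 * x) / 4 + sin (2 * x) / 8)
      (x ^ 2 * sin x ^ 2) x := by
  have h2 : HasDerivAt (fun x : ℝ => 2 * x) 2 x := by simpa using (hasDerivAt_id x).const_mul 2
  have hs := (hasDerivAt_sin (2 * x)).comp x h2
  have hc := (hasDerivAt_cos (2 * x)).comp x h2
  have hx := hasDerivAt_id' x
  have H := ((((hx.pow 3).div_const 6).sub (((hx.pow 2).mul hs).div_const 4)).sub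
    ((hx.mul hc).div_const 4)).add (hs.div_const 8)
  refine H.congr_deriv ?_
  simp only [Function.comp_apply, cos_two_mul, cos_sq']
  norm_num
  ring

theorem integral_sq_mul_sin_sq : ∫ x in (0 : ℝ)..π, x ^ 2 * sin x ^ 2 = π ^ 3 / 6 - π / 4 := by
  rw [integral_eq_sub_of_hasDerivAt (fun x _ => hasDerivAt_sq_mul_sin_sq_antideriv x)
    (by apply Continuous.intervalIntegrable; fun_prop)]
  simp

theorem integral_pi_sub_sq_mul_sin_sq :
    ∫ x in (0 : ℝ)..π, (π - x) ^ 2 * sin x ^ 2 = π ^ 3 / 6 - π / 4 := by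
  have h := integral_comp_sub_left (fun x => x ^ 2 * sin x ^ 2) π (a := 0) (b := π)
  simp only [sin_pi_sub, sub_zero, sub_self] at h
  rw [h, integral_sq_mul_sin_sq]

/-- The grounded Green kernel of order 2 on the unit 3-sphere,
`v(r) = (π-r)²/(4π²) + 1/(8π²) - 1/12`, solves `v'' + 2 cot(r) v' = -2u` where
`u = G̊^{S³}_{1,0}`, and has zero spherical average. -/
theorem sphere3_green_kernel_order_two :
    let v : ℝ → ℝ := fun r =>
      (Real.pi - r) ^ 2 / (4 * Real.pi ^ 2) + 1 / (8 * Real.pi ^ 2) - 1 / 12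
    let u : ℝ → ℝ := fun r =>
      (1 / (2 * Real.pi ^ 2)) * (-(1 / 2) + (Real.pi - r) * (Real.cos r / Real.sin r))
    (∀ r ∈ Set.Ioo (0 : ℝ) Real.pi,
        deriv (deriv v) r + 2 * (Real.cos r / Real.sin r) * deriv v r = -2 * u r) ∧
      (∫ r in (0 : ℝ)..Real.pi, v r * Real.sin r ^ 2) = 0 := by
  intro v u
  constructor
  · intro r _
    have hv : v = fun r => 1 / (4 * π ^ 2) * (π - r) ^ 2 + (1 / (8 * π ^ 2) - 1 / 12) := by
      funext r
      ring
    rw [hv, deriv_deriv_const_mul_sub_sq_add, deriv_const_mul_sub_sq_add]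
    simp only [u]
    ring
  · calc ∫ r in (0 : ℝ)..π, v r * sin r ^ 2
        = ∫ r in (0 : ℝ)..π, (1 / (4 * π ^ 2) * ((π - r) ^ 2 * sin r ^ 2)
            + (1 / (8 * π ^ 2) - 1 / 12) * sin r ^ 2) := by
          congr 1
          funext r
          ring
      _ = 1 / (4 * π ^ 2) * (π ^ 3 / 6 - π / 4) + (1 / (8 * π ^ 2) - 1 / 12) * (π / 2) := by
          rw [integral_add, integral_const_mul, integral_const_mul, integral_pi_sub_sq_mul_sin_sq,
            integral_sin_sq]
          · simp
          all_goals exact Continuous.intervalIntegrable (by fun_prop) _ _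
      _ = 0 := by
          field_simp
          ring
end
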